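/- arXiv:2302.05740 — 4 statements merged into one kernel-verified Lean document; each statement's English description precedes it below -/
import Mathlib

section
/- If β > 1, then the series ∑_{t=0}^∞ ∏_{k=0}^{t-1} (α+k)/(α+β+k) converges and its sum equals (α+β-1)/(β-1). -/
/-!
With `w t = ∏_{k<t} (α+k)/(α+β+k)` and the potential `c t = (α+β-1+t) w t`, the recursion
`(α+β+t) w (t+1) = (α+t) w t` gives `c t - c (t+1) = (β-1) w t`, so the series telescopes to
`(c 0 - lim c) / (β-1)` with `c 0 = α+β-1`. The potential is nonnegative and antitone, hence converges;
its limit `L` vanishes because otherwise `w t = c t / (t+α+β-1) ≥ L / (t+α+β-1)` would make the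
harmonic series summable.
-/

open Finset Filter Topology

theorem hasSum_of_eq_sub_succ {f c : ℕ → ℝ} {L : ℝ} (hf : ∀ n, 0 ≤ f n)
    (hfc : ∀ n, f n = c n - c (n + 1)) (hc : Tendsto c atTop (𝓝 L)) : HasSum f (c 0 - L) := by
  rw [hasSum_iff_tendsto_nat_of_nonneg hf]
  have hpartial : ∀ n, ∑ i ∈ range n, f i = c 0 - c n := fun n => by
    rw [sum_congr rfl fun i _ => hfc i, sum_range_sub']
  simpa only [hpartial] using tendsto_const_nhds.sub hc

theorem Real.not_summable_one_div_natCast_add {s : ℝ} (hs : 0 ≤ s) :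
    ¬Summable fun n : ℕ => 1 / (n + s) := by
  have h := Real.summable_one_div_nat_add_rpow s 1
  simp only [Real.rpow_one, lt_irrefl, iff_false] at h
  have habs : ∀ n : ℕ, |(n : ℝ) + s| = n + s := fun n => abs_of_nonneg (by positivity)
  simpa only [habs] using h

theorem Antitone.eq_zero_of_tendsto_of_summable_div_add {c : ℕ → ℝ} {L s : ℝ} (hc : Antitone c)
    (hcL : Tendsto c atTop (𝓝 L)) (hL : 0 ≤ L) (hs : 0 ≤ s)
    (hsum : Summable fun n => c n / (n + s)) : L = 0 := by
  by_contra hL0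
  have hLpos : 0 < L := hL.lt_of_ne' hL0
  have hbound : Summable fun n : ℕ => L * (1 / (n + s)) :=
    hsum.of_nonneg_of_le (fun n => by positivity) fun n => by
      rw [mul_one_div]
      exact div_le_div_of_nonneg_right (hc.le_of_tendsto hcL n) (by positivity)
  exact Real.not_summable_one_div_natCast_add hs ((summable_mul_left_iff hLpos.ne').1 hbound)

namespace BetaDiscount

noncomputable def weight (α β : ℝ) (t : ℕ) : ℝ := ∏ k ∈ range t, (α + k) / (α + β + k)

noncomputable def potential (α β : ℝ) (t : ℕ) : ℝ := (α + β - 1 + t) * weight α β t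

variable {α β : ℝ}

theorem weight_pos (hα : 0 < α) (hαβ : 0 < α + β) (t : ℕ) : 0 < weight α β t :=
  prod_pos fun k _ => div_pos (by positivity) (by positivity)

theorem add_mul_weight_succ (hαβ : 0 < α + β) (t : ℕ) :
    (α + β + t) * weight α β (t + 1) = (α + t) * weight α β t := by
  have ht : α + β + t ≠ 0 := by positivity
  simp only [weight, prod_range_succ]
  field_simp

theorem potential_sub_potential_succ (hαβ : 0 < α + β) (t : ℕ) :
    potential α β t - potential α β (t + 1) = (β - 1) * weight α β t := by
  have hrec := add_mul_weight_succ hαβ t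
  simp only [potential, Nat.cast_succ] at hrec ⊢
  linear_combination -hrec

theorem potential_zero : potential α β 0 = α + β - 1 := by
  simp [potential, weight]

theorem potential_div_add (hαβ : 1 < α + β) (t : ℕ) :
    potential α β t / (t + (α + β - 1)) = weight α β t := by
  have ht : α + β - 1 + t ≠ 0 := by
    have : (0 : ℝ) ≤ t := t.cast_nonneg
    exact ne_of_gt (by linarith)
  rw [potential, add_comm (t : ℝ), mul_div_cancel_left₀ _ ht]

theorem potential_nonneg (hα : 0 < α) (hαβ : 1 ≤ α + β) (t : ℕ) : 0 ≤ potential α β t := by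
  have := weight_pos hα (by linarith) t
  have : 0 ≤ α + β - 1 := by linarith
  unfold potential
  positivity

theorem antitone_potential (hα : 0 < α) (hβ : 1 ≤ β) : Antitone (potential α β) :=
  antitone_nat_of_succ_le fun t => by
    have hαβ : 0 < α + β := by linarith
    have := potential_sub_potential_succ hαβ t
    nlinarith [weight_pos hα hαβ t]

theorem hasSum_sub_one_mul_weight (hα : 0 < α) (hβ : 1 ≤ β) {L : ℝ}
    (hL : Tendsto (potential α β) atTop (𝓝 L)) :
    HasSum (fun t => (β - 1) * weight α β t) (α + β - 1 - L) := by
  have hαβ : 0 < α + β := by linarith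
  rw [← potential_zero]
  exact hasSum_of_eq_sub_succ (fun t => mul_nonneg (by linarith) (weight_pos hα hαβ t).le)
    (fun t => (potential_sub_potential_succ hαβ t).symm) hL

theorem tendsto_potential (hα : 0 < α) (hβ : 1 < β) :
    Tendsto (potential α β) atTop (𝓝 0) := by
  have hanti := antitone_potential hα hβ.le
  have hαβ : 1 < α + β := by linarith
  have hnonneg := potential_nonneg hα hαβ.le
  obtain ⟨L, hL⟩ : ∃ L, Tendsto (potential α β) atTop (𝓝 L) :=
    ⟨_, tendsto_atTop_ciInf hanti ⟨0, by rintro _ ⟨t, rfl⟩; exact hnonneg t⟩⟩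
  have hsum : Summable (weight α β) :=
    (summable_mul_left_iff (by linarith : β - 1 ≠ 0)).1
      (hasSum_sub_one_mul_weight hα hβ.le hL).summable
  have hL0 : L = 0 := by
    refine hanti.eq_zero_of_tendsto_of_summable_div_add hL (ge_of_tendsto' hL hnonneg)
      (s := α + β - 1) (by linarith) ?_
    simpa only [potential_div_add hαβ] using hsum
  exact hL0 ▸ hL

end BetaDiscount

/-- If β > 1, the Beta-weighted discounting is summable with sum (α+β-1)/(β-1). -/
theorem beta_discount_sum (α β : ℝ) (hα : 0 < α) (hβ : 1 < β) :
    HasSum (fun t : ℕ => ∏ k ∈ range t, (α + k) / (α + β + k))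
      ((α + β - 1) / (β - 1)) := by
  have hβ1 : β - 1 ≠ 0 := by linarith
  have htel :=
    BetaDiscount.hasSum_sub_one_mul_weight hα hβ.le (BetaDiscount.tendsto_potential hα hβ)
  rwa [sub_zero, ← mul_div_cancel₀ (α + β - 1) hβ1, hasSum_mul_left_iff hβ1] at htel
end

section
/- If 0 < β ≤ 1 and α > 0, then the series ∑_{t=0}^∞ ∏_{k=0}^{t-1} (α+k)/(α+β+k) diverges to infinity. -/
open Finset Filter

/-! Each factor `(α + k) / (α + β + k)` decreases in `β`, so for `β ≤ 1` the `t`-th term is at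
least its value at `β = 1`, which telescopes to `α / (α + t)`; the series of these diverges by
comparison with the harmonic series. -/

theorem prod_div_add_one_eq (α : ℝ) (hα : 0 < α) (t : ℕ) :
    ∏ k ∈ range t, (α + k) / (α + 1 + k) = α / (α + t) := by
  induction t with
  | zero => simp [hα.ne']
  | succ n ih =>
    rw [prod_range_succ, ih, div_mul_div_comm, div_eq_div_iff (by positivity) (by positivity)]
    push_cast
    ring

theorem prod_div_add_le_prod_div_add {α β γ : ℝ} (hα : 0 ≤ α) (hβ : 0 < β) (hβγ : β ≤ γ)
    (t : ℕ) :
    ∏ k ∈ range t, (α + k) / (α + γ + k) ≤ ∏ k ∈ range t, (α + k) / (α + β + k) := by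
  have hγ : 0 < γ := hβ.trans_le hβγ
  exact prod_le_prod (fun k _ => by positivity) fun k _ => by gcongr

theorem tendsto_sum_range_div_add_atTop {α : ℝ} (hα : 0 < α) :
    Tendsto (fun n : ℕ => ∑ t ∈ range n, α / (α + t)) atTop atTop := by
  have h_not_summable : ¬ Summable fun t : ℕ => α / (α + t) := by
    have h := (Real.summable_one_div_nat_add_rpow α 1).not.mpr (lt_irrefl 1)
    contrapose! h
    refine ((summable_mul_left_iff (inv_ne_zero hα.ne')).mpr h).congr fun t => ?_
    rw [Real.rpow_one, abs_of_pos (by positivity), add_comm]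
    field_simp
  exact (not_summable_iff_tendsto_nat_atTop_of_nonneg fun t => by positivity).mp h_not_summable

/-- If 0 < β ≤ 1 and α > 0, the Beta-weighted discounting series diverges to infinity. -/
theorem beta_discount_divergent (α β : ℝ) (hα : 0 < α) (hβ0 : 0 < β) (hβ1 : β ≤ 1) :
    Tendsto (fun n : ℕ => ∑ t ∈ range n, ∏ k ∈ range t, (α + k) / (α + β + k))
      atTop atTop := by
  refine tendsto_atTop_mono (fun n => sum_le_sum fun t _ => ?_)
    (tendsto_sum_range_div_add_atTop hα)
  rw [← prod_div_add_one_eq α hα t]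
  exact prod_div_add_le_prod_div_add hα.le hβ0 hβ1 t
end

section
/- Let λ ∈ [0,1) and γ ∈ [0,1), and define the k-step advantage A_t^{(k)} = -V(s_t) + ∑_{l=0}^{k-1} γ^l r_{t+l} + γ^k V(s_{t+k}) for bounded sequences of rewards r and values V. Then the λ-weighted combination (1-λ) ∑_{k=1}^∞ λ^{k-1} A_t^{(k)} equals ∑_{l=0}^∞ (γλ)^l δ_{t+l}, where δ_s = r_s + γ V(s_{s+1}) - V(s_s). -/
/-!
Telescoping the value terms writes the `k`-step advantage as `∑_{l<k} γ^l δ_{t+l}`. Hence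
`λ^k A_t^{(k+1)} = ∑_{l ≤ k} (γλ)^l δ_{t+l} · λ^{k-l}` is the Cauchy product of `(γλ)^l δ_{t+l}`
with the geometric series `λ^j`, whose sum `(1 - λ)⁻¹` cancels the prefactor `1 - λ`.
-/

open Finset

section Advantage

variable {R : Type*} [CommRing R]

def tdResidual (γ : R) (r V : ℕ → R) (s : ℕ) : R :=
  r s + γ * V (s + 1) - V s

def kStepAdvantage (γ : R) (r V : ℕ → R) (t k : ℕ) : R :=
  -V t + ∑ l ∈ range k, γ ^ l * r (t + l) + γ ^ k * V (t + k)

theorem kStepAdvantage_eq_sum_tdResidual (γ : R) (r V : ℕ → R) (t k : ℕ) :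
    kStepAdvantage γ r V t k = ∑ l ∈ range k, γ ^ l * tdResidual γ r V (t + l) := by
  induction k with
  | zero => simp [kStepAdvantage]
  | succ k ih =>
    rw [sum_range_succ, ← ih]
    simp only [kStepAdvantage, tdResidual, sum_range_succ, ← add_assoc]
    ring

end Advantage

theorem abs_tdResidual_le {γ Mr MV : ℝ} {r V : ℕ → ℝ} (hγ : |γ| ≤ 1)
    (hr : ∀ s, |r s| ≤ Mr) (hV : ∀ s, |V s| ≤ MV) (s : ℕ) :
    |tdResidual γ r V s| ≤ Mr + 2 * MV := by
  have hγV : |γ * V (s + 1)| ≤ MV := by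
    rw [abs_mul]
    nlinarith [abs_nonneg γ, abs_nonneg (V (s + 1)), hV (s + 1)]
  calc |tdResidual γ r V s| ≤ |r s| + |γ * V (s + 1)| + |V s| :=
        (abs_sub _ _).trans (add_le_add_left (abs_add_le _ _) _)
    _ ≤ Mr + 2 * MV := by linarith [hr s, hV s]

theorem summable_norm_pow_mul_of_norm_le {R : Type*} [NormedRing R] [HasSummableGeomSeries R]
    {ξ : R} (hξ : ‖ξ‖ < 1) {a : ℕ → R} {M : ℝ} (ha : ∀ l, ‖a l‖ ≤ M) :
    Summable fun l => ‖ξ ^ l * a l‖ :=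
  .of_nonneg_of_le (fun _ => norm_nonneg _)
    (fun l => (norm_mul_le _ _).trans (mul_le_mul_of_nonneg_left (ha l) (norm_nonneg _)))
    ((summable_norm_geometric_of_norm_lt_one hξ).mul_right M)

theorem one_sub_mul_tsum_pow_mul_sum_range {R : Type*} [NormedCommRing R] [CompleteSpace R]
    {ξ : R} (hξ : ‖ξ‖ < 1) {a : ℕ → R} (ha : Summable fun l => ‖ξ ^ l * a l‖) :
    (1 - ξ) * ∑' k, ξ ^ k * ∑ l ∈ range (k + 1), a l = ∑' l, ξ ^ l * a l := by
  have hcauchy : ∀ k, ξ ^ k * ∑ l ∈ range (k + 1), a l =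
      ∑ l ∈ range (k + 1), ξ ^ l * a l * ξ ^ (k - l) := fun k => by
    rw [mul_sum]
    refine sum_congr rfl fun l hl => ?_
    rw [← pow_mul_pow_sub ξ (mem_range_succ_iff.mp hl)]
    ring
  rw [tsum_congr hcauchy, ← tsum_mul_tsum_eq_tsum_sum_range_of_summable_norm ha
    (summable_norm_geometric_of_norm_lt_one hξ), mul_left_comm, mul_neg_geom_series ξ hξ,
    mul_one]

/-- The standard GAE identity: the λ-weighted combination of k-step advantages equals the
exponentially weighted sum of TD residuals. -/
theorem gae_identity (γ lam : ℝ) (hγ0 : 0 ≤ γ) (hγ1 : γ < 1)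
    (hlam0 : 0 ≤ lam) (hlam1 : lam < 1)
    (r V : ℕ → ℝ) (hr : ∃ M, ∀ t, |r t| ≤ M) (hV : ∃ M, ∀ t, |V t| ≤ M) (t : ℕ) :
    (1 - lam) * ∑' k : ℕ, lam ^ k *
        (-V t + ∑ l ∈ range (k + 1), γ ^ l * r (t + l) + γ ^ (k + 1) * V (t + (k + 1))) =
      ∑' l : ℕ, (γ * lam) ^ l * (r (t + l) + γ * V (t + l + 1) - V (t + l)) := by
  obtain ⟨Mr, hMr⟩ := hr
  obtain ⟨MV, hMV⟩ := hV
  have hγ : |γ| ≤ 1 := by rw [abs_of_nonneg hγ0]; exact hγ1.le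
  have hbound : ∀ l, ‖γ ^ l * tdResidual γ r V (t + l)‖ ≤ Mr + 2 * MV := fun l => by
    rw [Real.norm_eq_abs, abs_mul, abs_pow]
    exact mul_le_of_le_one_left (abs_nonneg _) (pow_le_one₀ (abs_nonneg γ) hγ)
      |>.trans (abs_tdResidual_le hγ hMr hMV _)
  have hlam : ‖lam‖ < 1 := by rw [Real.norm_of_nonneg hlam0]; exact hlam1
  change (1 - lam) * ∑' k, lam ^ k * kStepAdvantage γ r V t (k + 1) = _
  simp_rw [kStepAdvantage_eq_sum_tdResidual]
  rw [one_sub_mul_tsum_pow_mul_sum_range hlam (summable_norm_pow_mul_of_norm_le hlam hbound)]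
  exact tsum_congr fun l => by rw [mul_pow, tdResidual]; ring
end

section
/- Let λ ∈ [0,1), let Γ : ℕ → [0,1] be an arbitrary discounting with Γ(0) = 1, and let r, V : ℕ → ℝ be bounded. Define the k-step advantage Ã_t^{(k)} = -V(t) + ∑_{l=0}^{k-1} Γ(l) r(t+l) + Γ(k) V(t+k). Then (1-λ) ∑_{k=1}^∞ λ^{k-1} Ã_t^{(k)} = -V(t) + ∑_{l=0}^∞ λ^l Γ(l) r(t+l) + (1-λ) ∑_{l=0}^∞ λ^l Γ(l+1) V(t+l+1), and all series involved converge absolutely. -/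
/-!
The `k`-th term splits as `λ^k (-V t) + λ^k (a₀ + ⋯ + a_k) + λ^k Γ(k+1) V(t+k+1)` with
`a_l = Γ l r (t+l)`; boundedness makes each piece absolutely summable against the geometric
weights. The middle series is the Cauchy product of `∑ λ^l a_l` with `∑ λ^k = (1-λ)⁻¹`, so after
multiplying by `1 - λ` it becomes `∑ λ^l a_l`, while the first series becomes `-V t`.
-/

open Finset

section GeometricWeights

variable {𝕜 : Type*} [NormedField 𝕜] {ξ : 𝕜}

lemma summable_norm_pow_mul_of_norm_le_s9 (hξ : ‖ξ‖ < 1) {f : ℕ → 𝕜} {M : ℝ}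
    (hf : ∀ n, ‖f n‖ ≤ M) : Summable fun n => ‖ξ ^ n * f n‖ := by
  refine Summable.of_nonneg_of_le (fun _ => norm_nonneg _) (fun n => ?_)
    ((summable_geometric_of_lt_one (norm_nonneg ξ) hξ).mul_right M)
  rw [norm_mul, norm_pow]
  exact mul_le_mul_of_nonneg_left (hf n) (by positivity)

lemma pow_mul_sum_range_succ (a : ℕ → 𝕜) (n : ℕ) :
    ξ ^ n * ∑ l ∈ range (n + 1), a l = ∑ l ∈ range (n + 1), ξ ^ l * a l * ξ ^ (n - l) := by
  rw [mul_sum]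
  refine sum_congr rfl fun l hl => ?_
  rw [mul_right_comm, ← pow_add, Nat.add_sub_cancel' (Nat.lt_succ_iff.mp (mem_range.mp hl))]

lemma summable_norm_pow_mul_sum_range_succ (hξ : ‖ξ‖ < 1) {a : ℕ → 𝕜}
    (ha : Summable fun l => ‖ξ ^ l * a l‖) :
    Summable fun n => ‖ξ ^ n * ∑ l ∈ range (n + 1), a l‖ := by
  simp_rw [pow_mul_sum_range_succ]
  exact summable_norm_sum_mul_range_of_summable_norm ha
    (summable_norm_geometric_of_norm_lt_one hξ)

lemma one_sub_mul_tsum_pow_mul_sum_range_succ [CompleteSpace 𝕜] (hξ : ‖ξ‖ < 1) {a : ℕ → 𝕜}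
    (ha : Summable fun l => ‖ξ ^ l * a l‖) :
    (1 - ξ) * ∑' n, ξ ^ n * ∑ l ∈ range (n + 1), a l = ∑' l, ξ ^ l * a l := by
  have hξ1 : 1 - ξ ≠ 0 := sub_ne_zero.mpr fun h => by simp [← h] at hξ
  have hcauchy := tsum_mul_tsum_eq_tsum_sum_range_of_summable_norm ha
    (summable_norm_geometric_of_norm_lt_one hξ)
  rw [tsum_geometric_of_norm_lt_one hξ, ← tsum_congr (pow_mul_sum_range_succ a)] at hcauchy
  rw [← hcauchy, mul_comm, mul_assoc, inv_mul_cancel₀ hξ1, mul_one]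

end GeometricWeights

theorem ugae_identity_general (lam : ℝ) (hlam0 : 0 ≤ lam) (hlam1 : lam < 1)
    (Γ : ℕ → ℝ) (hΓ : ∀ t, Γ t ∈ Set.Icc (0 : ℝ) 1)
    (r V : ℕ → ℝ) (hr : ∃ M, ∀ t, |r t| ≤ M) (hV : ∃ M, ∀ t, |V t| ≤ M) (t : ℕ) :
    Summable (fun k : ℕ => |lam ^ k *
        (-V t + ∑ l ∈ range (k + 1), Γ l * r (t + l) + Γ (k + 1) * V (t + (k + 1)))|) ∧
    Summable (fun l : ℕ => |lam ^ l * Γ l * r (t + l)|) ∧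
    Summable (fun l : ℕ => |lam ^ l * Γ (l + 1) * V (t + l + 1)|) ∧
    (1 - lam) * ∑' k : ℕ, lam ^ k *
        (-V t + ∑ l ∈ range (k + 1), Γ l * r (t + l) + Γ (k + 1) * V (t + (k + 1))) =
      -V t + (∑' l : ℕ, lam ^ l * Γ l * r (t + l)) +
        (1 - lam) * ∑' l : ℕ, lam ^ l * Γ (l + 1) * V (t + l + 1) := by
  obtain ⟨Mr, hMr⟩ := hr
  obtain ⟨MV, hMV⟩ := hV
  simp only [mul_assoc]
  have hlam : ‖lam‖ < 1 := by rwa [Real.norm_of_nonneg hlam0]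
  have hΓle : ∀ l, ∀ x : ℝ, |Γ l * x| ≤ |x| := fun l x => by
    rw [abs_mul, abs_of_nonneg (hΓ l).1]
    exact mul_le_of_le_one_left (abs_nonneg x) (hΓ l).2
  have hreward : Summable fun l => ‖lam ^ l * (Γ l * r (t + l))‖ :=
    summable_norm_pow_mul_of_norm_le_s9 hlam fun l => (hΓle l _).trans (hMr _)
  have hvalue : Summable fun l => ‖lam ^ l * (Γ (l + 1) * V (t + l + 1))‖ :=
    summable_norm_pow_mul_of_norm_le_s9 hlam fun l => (hΓle _ _).trans (hMV _)
  have hpartial := summable_norm_pow_mul_sum_range_succ hlam hreward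
  have hconst : Summable fun k => lam ^ k * -V t :=
    (summable_geometric_of_lt_one hlam0 hlam1).mul_right _
  have hsplit : ∀ k, lam ^ k * (-V t + ∑ l ∈ range (k + 1), Γ l * r (t + l) +
      Γ (k + 1) * V (t + (k + 1))) = lam ^ k * -V t +
      lam ^ k * ∑ l ∈ range (k + 1), Γ l * r (t + l) + lam ^ k * (Γ (k + 1) * V (t + k + 1)) :=
    fun k => by ring_nf
  have hsum := (hconst.add hpartial.of_norm).add hvalue.of_norm
  refine ⟨(hsum.congr fun k => (hsplit k).symm).abs, hreward, hvalue, ?_⟩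
  rw [tsum_congr hsplit, (hconst.add hpartial.of_norm).tsum_add hvalue.of_norm,
    hconst.tsum_add hpartial.of_norm,
    tsum_mul_right, tsum_geometric_of_lt_one hlam0 hlam1, mul_add, mul_add,
    one_sub_mul_tsum_pow_mul_sum_range_succ hlam hreward, ← mul_assoc,
    mul_inv_cancel₀ (sub_ne_zero.mpr hlam1.ne'), one_mul]

/-- The UGAE identity: GAE with an arbitrary discounting Γ bounded in [0,1], with
absolute convergence of all series involved. -/
theorem ugae_identity (lam : ℝ) (hlam0 : 0 ≤ lam) (hlam1 : lam < 1)
    (Γ : ℕ → ℝ) (hΓ : ∀ t, Γ t ∈ Set.Icc (0 : ℝ) 1) (hΓ0 : Γ 0 = 1)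
    (r V : ℕ → ℝ) (hr : ∃ M, ∀ t, |r t| ≤ M) (hV : ∃ M, ∀ t, |V t| ≤ M) (t : ℕ) :
    Summable (fun k : ℕ => |lam ^ k *
        (-V t + ∑ l ∈ range (k + 1), Γ l * r (t + l) + Γ (k + 1) * V (t + (k + 1)))|) ∧
    Summable (fun l : ℕ => |lam ^ l * Γ l * r (t + l)|) ∧
    Summable (fun l : ℕ => |lam ^ l * Γ (l + 1) * V (t + l + 1)|) ∧
    (1 - lam) * ∑' k : ℕ, lam ^ k *
        (-V t + ∑ l ∈ range (k + 1), Γ l * r (t + l) + Γ (k + 1) * V (t + (k + 1))) =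
      -V t + (∑' l : ℕ, lam ^ l * Γ l * r (t + l)) +
        (1 - lam) * ∑' l : ℕ, lam ^ l * Γ (l + 1) * V (t + l + 1) :=
  ugae_identity_general lam hlam0 hlam1 Γ hΓ r V hr hV t
end
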